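/- arXiv:2403.09127 — 5 statements merged into one kernel-verified Lean document; each statement's English description precedes it below -/
import Mathlib

section
/- Let V be a finite set, let E_1, …, E_T be directed acyclic graphs (DAGs) on V, and let S_0 ⊆ V. For k = 1, …, T define S_k := Sync(E_k, S_{k−1}). If every root node r of E_1 with the property that (r,1) reaches (r',T) in the fused graph 𝒢 for some root node r' of E_T belongs to S_0, then S_T = V. -/
/-- A node `i` is a root node of the digraph `E` (where `E j i` denotes an edge
from `j` to `i`) if it has no in-neighbors. -/
def isRoot {V : Type*} (E : V → V → Prop) (i : V) : Prop := ∀ j, ¬ E j i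

/-- A digraph is a DAG if its transitive closure is irreflexive,
i.e. there is no directed cycle. -/
def IsDAG {V : Type*} (E : V → V → Prop) : Prop := ∀ i, ¬ Relation.TransGen E i i

/-- Given a DAG `E` on `V` and a set `S` of nodes synchronized at the start of a
snapshot, `sync E S` is the set of nodes synchronized at the end of the snapshot:
those nodes `i` such that every root node of `E` reaching `i` belongs to `S`. -/
def sync {V : Type*} (E : V → V → Prop) (S : Set V) : Set V :=
  { i | ∀ r, isRoot E r → Relation.ReflTransGen E r i → r ∈ S }

/-- The fused graph of the snapshots `E 0, …, E (T-1)` (snapshot `k : Fin T`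
represents the (k+1)-st snapshot).  It has an edge from `(j,k)` to `(i,k)` for
every edge `(j,i)` of `E k`, and an edge from `(r, k-1)` to `(r, k)` for every
root node `r` of `E k` with `k ≥ 1`. -/
def fused {V : Type*} {T : ℕ} (E : Fin T → V → V → Prop) :
    (V × Fin T) → (V × Fin T) → Prop :=
  fun p q =>
    (p.2 = q.2 ∧ E q.2 p.1 q.1) ∨
    (p.1 = q.1 ∧ (p.2 : ℕ) + 1 = (q.2 : ℕ) ∧ isRoot (E q.2) q.1)

/-! A root `r` of snapshot `k + 1` has the fused edge `(r, k) → (r, k + 1)`, so a root of `E k`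
reaching `r` inside `E k` reaches, in the fused graph, every node that `(r, k + 1)` reaches. By
induction on `k`, every root of snapshot `k` reaching a fixed node `p` of the fused graph therefore
lies in `S k`. Taking `p = (r, T - 1)` for each root `r` of the last snapshot puts all roots of
`E (T - 1)` into `S (T - 1)`, and then `sync` marks every node. -/

open Relation

section

variable {V : Type*}

theorem sync_eq_univ_of_isRoot_mem {E : V → V → Prop} {S : Set V}
    (hS : ∀ r, isRoot E r → r ∈ S) : sync E S = Set.univ :=
  Set.eq_univ_of_forall fun _ r hr _ => hS r hr

variable {T : ℕ} (E : Fin T → V → V → Prop)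

theorem reflTransGen_fused_of_reflTransGen {k : Fin T} {a b : V}
    (h : ReflTransGen (E k) a b) : ReflTransGen (fused E) (a, k) (b, k) :=
  h.lift (fun x => (x, k)) fun _ _ hab => Or.inl ⟨rfl, hab⟩

theorem fused_of_isRoot_succ {k : ℕ} (hk : k + 1 < T) {r : V}
    (hr : isRoot (E ⟨k + 1, hk⟩) r) : fused E (r, ⟨k, k.lt_of_succ_lt hk⟩) (r, ⟨k + 1, hk⟩) :=
  Or.inr ⟨rfl, rfl, hr⟩

theorem mem_of_isRoot_of_reflTransGen_fused (hT : 0 < T) (S : ℕ → Set V)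
    (hstep : ∀ k : Fin T, S ((k : ℕ) + 1) = sync (E k) (S (k : ℕ))) (p : V × Fin T)
    (h₀ : ∀ r, isRoot (E ⟨0, hT⟩) r → ReflTransGen (fused E) (r, ⟨0, hT⟩) p → r ∈ S 0) :
    ∀ (k : ℕ) (hk : k < T) (r : V), isRoot (E ⟨k, hk⟩) r →
      ReflTransGen (fused E) (r, ⟨k, hk⟩) p → r ∈ S k
  | 0, _, r, hr, hp => h₀ r hr hp
  | k + 1, hk, r, hr, hp => by
    rw [hstep ⟨k, k.lt_of_succ_lt hk⟩]
    intro r₀ hr₀ hreach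
    refine mem_of_isRoot_of_reflTransGen_fused hT S hstep p h₀ k _ r₀ hr₀ ?_
    exact (reflTransGen_fused_of_reflTransGen E hreach).trans
      (.head (fused_of_isRoot_succ E hk hr) hp)

end

theorem fusedGraph_path_condition_implies_full_sync_general
    {V : Type*} {T : ℕ} (hT : 0 < T)
    (E : Fin T → V → V → Prop)
    (S : ℕ → Set V)
    (hstep : ∀ k : Fin T, S ((k : ℕ) + 1) = sync (E k) (S (k : ℕ)))
    (hpin : ∀ r : V, isRoot (E ⟨0, hT⟩) r →
      (∃ r' : V, isRoot (E ⟨T - 1, Nat.sub_lt hT one_pos⟩) r' ∧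
        Relation.ReflTransGen (fused E) (r, ⟨0, hT⟩) (r', ⟨T - 1, Nat.sub_lt hT one_pos⟩)) →
      r ∈ S 0) :
    S T = Set.univ := by
  set last : Fin T := ⟨T - 1, Nat.sub_lt hT one_pos⟩
  have hlast : (last : ℕ) + 1 = T := Nat.sub_add_cancel hT
  rw [← hlast, hstep last]
  refine sync_eq_univ_of_isRoot_mem fun r hr => ?_
  exact mem_of_isRoot_of_reflTransGen_fused E hT S hstep (r, last)
    (fun r₀ hr₀ hp => hpin r₀ hr₀ ⟨r, hr, hp⟩) (T - 1) last.isLt r hr .refl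

/-- If `E 0, …, E (T-1)` are DAGs on a finite set `V`,
`S 0 = S₀` and `S (k+1) = sync (E k) (S k)`, and every root node `r` of the first
snapshot which reaches, in the fused graph, some root node `r'` of the last
snapshot belongs to `S 0`, then `S T = V`. -/
theorem fusedGraph_path_condition_implies_full_sync
    {V : Type*} [Fintype V] {T : ℕ} (hT : 0 < T)
    (E : Fin T → V → V → Prop) (hE : ∀ k, IsDAG (E k))
    (S : ℕ → Set V)
    (hstep : ∀ k : Fin T, S ((k : ℕ) + 1) = sync (E k) (S (k : ℕ)))
    (hpin : ∀ r : V, isRoot (E ⟨0, hT⟩) r →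
      (∃ r' : V, isRoot (E ⟨T - 1, Nat.sub_lt hT one_pos⟩) r' ∧
        Relation.ReflTransGen (fused E) (r, ⟨0, hT⟩) (r', ⟨T - 1, Nat.sub_lt hT one_pos⟩)) →
      r ∈ S 0) :
    S T = Set.univ :=
  fusedGraph_path_condition_implies_full_sync_general hT E S hstep hpin
end

section
/- Let E be a DAG on a finite set V and let S ⊆ V. Define C ⊆ V to be the least set satisfying: (i) every root node of E that belongs to S is in C, and (ii) every node that has at least one in-neighbor and all of whose in-neighbors are in C is in C. Then C = Sync(E,S), i.e., a node i belongs to C if and only if every root node of E that reaches i belongs to S. -/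
/-- `syncClosure E S` is the least set `C` such that (i) every root node of `E`
belonging to `S` is in `C`, and (ii) every node that has at least one in-neighbor,
all of whose in-neighbors are in `C`, is in `C`. -/
inductive syncClosure {V : Type*} (E : V → V → Prop) (S : Set V) : V → Prop
  | root (i : V) : isRoot E i → i ∈ S → syncClosure E S i
  | step (i : V) : (∃ j, E j i) → (∀ j, E j i → syncClosure E S j) → syncClosure E S i

/-- For a DAG `E` on a finite set `V` and `S ⊆ V`, the least set
`C = syncClosure E S` coincides with `sync E S`: a node `i` belongs to `C` iff every
root node of `E` that reaches `i` belongs to `S`. -/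
theorem syncClosure_eq_sync {V : Type*} [Fintype V]
    (E : V → V → Prop) (hE : IsDAG E) (S : Set V) :
    ∀ i : V, syncClosure E S i ↔ i ∈ sync E S := by
  have hwf : WellFounded E := by
    haveI : IsIrrefl V (Relation.TransGen E) := ⟨hE⟩
    have htg : WellFounded (Relation.TransGen E) :=
      Finite.wellFounded_of_trans_of_irrefl _
    exact Subrelation.wf (fun h => Relation.TransGen.single h) htg
  intro i
  constructor
  · intro h
    induction h with
    | root i hroot hS =>
      intro r hr hreach
      rcases hreach.cases_tail with rfl | ⟨b, _, hb⟩
      · exact hS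
      · exact absurd hb (hroot b)
    | step i hex hall ih =>
      intro r hr hreach
      rcases hreach.cases_tail with rfl | ⟨b, hrb, hb⟩
      · rcases hex with ⟨j, hj⟩; exact absurd hj (hr j)
      · exact ih b hb r hr hrb
  · intro h
    induction i using hwf.induction with
    | _ i ih =>
      by_cases hroot : isRoot E i
      · exact syncClosure.root i hroot (h i hroot Relation.ReflTransGen.refl)
      · simp only [isRoot, not_forall, not_not] at hroot
        rcases hroot with ⟨j, hj⟩
        refine syncClosure.step i ⟨j, hj⟩ (fun k hk => ih k hk ?_)
        intro r hr hreach
        exact h r hr (hreach.tail hk)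
end

section
/- Let E_1, …, E_T be DAGs on a finite set V. Then the fused graph 𝒢 on V × {1, …, T} is itself a DAG, i.e., 𝒢 has no directed cycle. -/
/-- If `E 0, …, E (T-1)` are DAGs on a finite set `V`, then the
fused graph on `V × Fin T` is itself a DAG. -/
theorem fused_isDAG {V : Type*} [Fintype V] {T : ℕ}
    (E : Fin T → V → V → Prop) (hE : ∀ k, IsDAG (E k)) :
    IsDAG (fused E) := by
  have key : ∀ p q : V × Fin T, Relation.TransGen (fused E) p q →
      (p.2 : ℕ) < (q.2 : ℕ) ∨ (p.2 = q.2 ∧ Relation.TransGen (E q.2) p.1 q.1) := by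
    intro p q h
    induction h with
    | single h =>
      rcases h with ⟨h1, h2⟩ | ⟨_, h2, _⟩
      · exact Or.inr ⟨h1, Relation.TransGen.single h2⟩
      · omega
    | tail _ h ih =>
      rename_i q r
      rcases h with ⟨h1, h2⟩ | ⟨_, h2, _⟩
      · rcases ih with hlt | ⟨heq, htg⟩
        · left; omega
        · right
          refine ⟨heq.trans h1, ?_⟩
          rw [h1] at htg
          exact htg.tail h2
      · rcases ih with hlt | ⟨heq, _⟩ <;> [left; left] <;> omega
  intro p h
  rcases key p p h with hlt | ⟨_, htg⟩
  · omega
  · exact hE p.2 p.1 htg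
end

section
/- Let E_1, …, E_T be DAGs on a finite set V with |V| = N, and for k ∈ {1,…,T} let N_k(i) denote the set of in-neighbors of i in E_k. Consider real variables s = (s_{i,k})_{i ∈ V, k ∈ {0,…,T}} subject to the constraints: (i) 0 ≤ s_{i,k} ≤ 1 for all i, k; (ii) |N_k(i)| · s_{i,k} ≤ Σ_{j ∈ N_k(i)} s_{j,k} for every k ∈ {1,…,T} and every i with N_k(i) ≠ ∅; (iii) s_{i,k} ≤ s_{i,k−1} for every k ∈ {1,…,T} and every root node i of E_k; (iv) Σ_{i ∈ V} s_{i,T} = N. Then the minimum of Σ_{i ∈ V} s_{i,0} over all real-valued feasible s is attained at a feasible s all of whose coordinates lie in {0,1}; consequently, the optimal value of this linear program equals the optimal value of the corresponding integer linear program in which additionally s_{i,k} ∈ {0,1} is required for all i, k. -/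
open Finset

/-- The feasible set of the LP relaxation: `s i k` is the (relaxed) synchronization
status of node `i` at time `k ∈ {0, …, T}`; the snapshot `E k` (for `k : Fin T`)
governs the transition from time `k` to time `k+1`.
(i)  `0 ≤ s i k ≤ 1` for all `i` and all `k ≤ T`;
(ii) `|N_k(i)| · s i (k+1) ≤ ∑_{j ∈ N_k(i)} s j (k+1)` whenever `N_k(i) ≠ ∅`,
     `N_k(i)` being the in-neighborhood of `i` in the snapshot `E k`;
(iii) `s i (k+1) ≤ s i k` for every root node `i` of the snapshot `E k`;
(iv) `∑_i s i T = N = |V|`. -/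
def LPFeasible {V : Type*} [Fintype V] {T : ℕ}
    (E : Fin T → V → V → Prop) [∀ k, DecidableRel (E k)]
    (s : V → ℕ → ℝ) : Prop :=
  (∀ i : V, ∀ k ≤ T, 0 ≤ s i k ∧ s i k ≤ 1) ∧
  (∀ k : Fin T, ∀ i : V, (∃ j, E k j i) →
    ((univ.filter (fun j => E k j i)).card : ℝ) * s i ((k : ℕ) + 1) ≤
      ∑ j ∈ univ.filter (fun j => E k j i), s j ((k : ℕ) + 1)) ∧
  (∀ k : Fin T, ∀ i : V, isRoot (E k) i → s i ((k : ℕ) + 1) ≤ s i (k : ℕ)) ∧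
  (∑ i : V, s i T = (Fintype.card V : ℝ))

namespace LPAux

set_option linter.unusedSectionVars false

variable {V : Type*} [Fintype V] {T : ℕ}

def rel (E : Fin T → V → V → Prop) (t : ℕ) : V → V → Prop :=
  fun a b => ∃ k : Fin T, (k : ℕ) + 1 = t ∧ E k a b

def Gset (E : Fin T → V → V → Prop) (t : ℕ) : Set V :=
  if h : t < T then
    {j | ∃ i, (isRoot (E ⟨t, h⟩) i ∧ i ∈ Gset E (t + 1)) ∧
      Relation.ReflTransGen (rel E t) j i}
  else Set.univ
  termination_by T - t
  decreasing_by omega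

lemma Gset_of_le (E : Fin T → V → V → Prop) {t : ℕ} (h : T ≤ t) :
    Gset E t = Set.univ := by
  rw [Gset, dif_neg (by omega)]

lemma Gset_closed (E : Fin T → V → V → Prop) {t : ℕ} {i j : V}
    (hi : i ∈ Gset E t) (hji : rel E t j i) : j ∈ Gset E t := by
  by_cases h : t < T
  · rw [Gset, dif_pos h] at hi ⊢
    obtain ⟨i₀, hsrc, hpath⟩ := hi
    exact ⟨i₀, hsrc, hpath.head hji⟩
  · rw [Gset, dif_neg h]; trivial

lemma Gset_source (E : Fin T → V → V → Prop) {t : ℕ} (h : t < T) {i : V}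
    (hr : isRoot (E ⟨t, h⟩) i) (hi : i ∈ Gset E (t + 1)) : i ∈ Gset E t := by
  rw [Gset, dif_pos h]
  exact ⟨i, ⟨hr, hi⟩, Relation.ReflTransGen.refl⟩

lemma all_eq_one {A : Finset V} {f : V → ℝ} (h1 : ∀ j ∈ A, f j ≤ 1)
    (h2 : (A.card : ℝ) ≤ ∑ j ∈ A, f j) : ∀ j ∈ A, f j = 1 := by
  have hnn : ∀ j ∈ A, 0 ≤ 1 - f j := fun j hj => by linarith [h1 j hj]
  have h0 : ∑ j ∈ A, (1 - f j) = 0 := by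
    have : ∑ j ∈ A, (1 - f j) = A.card - ∑ j ∈ A, f j := by
      rw [Finset.sum_sub_distrib, Finset.sum_const, nsmul_eq_mul, mul_one]
    have hle : ∑ j ∈ A, (1 - f j) ≤ 0 := by rw [this]; linarith
    exact le_antisymm hle (Finset.sum_nonneg hnn)
  intro j hj
  have := (Finset.sum_eq_zero_iff_of_nonneg hnn).mp h0 j hj
  linarith

/-- Any feasible point is `1` on the forced sets. -/
lemma forced (E : Fin T → V → V → Prop) [∀ k, DecidableRel (E k)]
    {t : V → ℕ → ℝ} (hf : LPFeasible E t) :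
    ∀ d τ, T - τ ≤ d → τ ≤ T → ∀ i ∈ Gset E τ, t i τ = 1 := by
  obtain ⟨h1, h2, h3, h4⟩ := hf
  have hT : ∀ i : V, t i T = 1 := by
    intro i
    refine all_eq_one (f := fun i => t i T) (A := univ)
      (fun j _ => (h1 j T le_rfl).2) ?_ i (mem_univ i)
    rw [h4, Fintype.card, Finset.card_univ]
  intro d
  induction d with
  | zero =>
    intro τ hd hτ i _
    have : τ = T := by omega
    subst this; exact hT i
  | succ d ih =>
    intro τ hd hτ i hi
    rcases eq_or_lt_of_le hτ with hτT | hτT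
    · subst hτT; exact hT i
    · rw [Gset, dif_pos hτT] at hi
      obtain ⟨i₀, ⟨hroot, hi₀⟩, hpath⟩ := hi
      have hbase : t i₀ τ = 1 := by
        have h1' : t i₀ (τ + 1) = 1 := ih (τ + 1) (by omega) (by omega) i₀ hi₀
        have h3' := h3 ⟨τ, hτT⟩ i₀ hroot
        simp only at h3'
        have := (h1 i₀ τ (le_of_lt hτT)).2
        linarith
      clear hroot hi₀
      induction hpath using Relation.ReflTransGen.head_induction_on with
      | refl => exact hbase
      | head hab hbc ihp =>
        rename_i a b
        obtain ⟨k, hk1, hE⟩ := hab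
        have hib : t b ((k : ℕ) + 1) = 1 := by rw [hk1]; exact ihp
        have h2' := h2 k b ⟨a, hE⟩
        rw [hib, mul_one] at h2'
        have hall := all_eq_one (f := fun j => t j ((k : ℕ) + 1))
          (A := univ.filter (fun j => E k j b))
          (fun j _ => (h1 j ((k : ℕ) + 1) k.isLt).2) h2'
        have := hall a (by simpa using hE)
        simpa [hk1] using this

open scoped Classical in
noncomputable def sfun (E : Fin T → V → V → Prop) (i : V) (t : ℕ) : ℝ :=
  if i ∈ Gset E t then 1 else 0

lemma sfun_binary (E : Fin T → V → V → Prop) (i : V) (t : ℕ) :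
    sfun E i t = 0 ∨ sfun E i t = 1 := by
  unfold sfun; split <;> simp

lemma sfun_feasible (E : Fin T → V → V → Prop) [∀ k, DecidableRel (E k)] :
    LPFeasible E (sfun E) := by
  classical
  refine ⟨?_, ?_, ?_, ?_⟩
  · intro i k _
    rcases sfun_binary E i k with h | h <;> rw [h] <;> norm_num
  · intro k i ⟨j, hj⟩
    by_cases hi : i ∈ Gset E ((k : ℕ) + 1)
    · have hall : ∀ a ∈ univ.filter (fun j => E k j i),
          sfun E a ((k : ℕ) + 1) = 1 := by
        intro a ha
        have hEa : E k a i := by simpa using ha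
        have : a ∈ Gset E ((k : ℕ) + 1) :=
          Gset_closed E hi ⟨k, rfl, hEa⟩
        simp [sfun, this]
      rw [Finset.sum_congr rfl hall, Finset.sum_const, nsmul_eq_mul, mul_one]
      have : sfun E i ((k : ℕ) + 1) = 1 := by simp [sfun, hi]
      rw [this, mul_one]
    · have : sfun E i ((k : ℕ) + 1) = 0 := by simp [sfun, hi]
      rw [this, mul_zero]
      refine Finset.sum_nonneg fun a _ => ?_
      rcases sfun_binary E a ((k : ℕ) + 1) with h | h <;> rw [h] <;> norm_num
  · intro k i hroot
    by_cases hi : i ∈ Gset E ((k : ℕ) + 1)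
    · have hroot' : isRoot (E ⟨(k : ℕ), k.isLt⟩) i := by
        simpa using hroot
      have : i ∈ Gset E (k : ℕ) := Gset_source E k.isLt hroot' hi
      simp [sfun, hi, this]
    · have h0 : sfun E i ((k : ℕ) + 1) = 0 := by simp [sfun, hi]
      rw [h0]
      rcases sfun_binary E i (k : ℕ) with h | h <;> rw [h] <;> norm_num
  · have : ∀ i : V, sfun E i T = 1 := by
      intro i
      have : i ∈ Gset E T := by rw [Gset_of_le E le_rfl]; trivial
      simp [sfun, this]
    rw [Finset.sum_congr rfl fun i _ => this i, Finset.sum_const, nsmul_eq_mul,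
      mul_one, Fintype.card, Finset.card_univ]

end LPAux

/-- The minimum of `∑_i s i 0` over the real-valued feasible set of
the LP is attained at a feasible point all of whose coordinates are `0` or `1`;
consequently the LP optimum coincides with the optimum of the corresponding integer
linear program. -/

theorem lp_relaxation_has_integral_optimum {V : Type*} [Fintype V] {T : ℕ}
    (E : Fin T → V → V → Prop) [∀ k, DecidableRel (E k)]
    (hE : ∀ k, IsDAG (E k)) :
    ∃ s : V → ℕ → ℝ, LPFeasible E s ∧
      (∀ i : V, ∀ k ≤ T, s i k = 0 ∨ s i k = 1) ∧
      IsLeast {x : ℝ | ∃ t : V → ℕ → ℝ, LPFeasible E t ∧ x = ∑ i : V, t i 0}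
        (∑ i : V, s i 0) ∧
      IsLeast {x : ℝ | ∃ t : V → ℕ → ℝ, LPFeasible E t ∧
          (∀ i : V, ∀ k ≤ T, t i k = 0 ∨ t i k = 1) ∧ x = ∑ i : V, t i 0}
        (∑ i : V, s i 0) := by
  classical
  refine ⟨LPAux.sfun E, LPAux.sfun_feasible E, fun i k _ => LPAux.sfun_binary E i k,
    ?_, ?_⟩
  · constructor
    · exact ⟨LPAux.sfun E, LPAux.sfun_feasible E, rfl⟩
    · rintro x ⟨t, ht, rfl⟩
      refine Finset.sum_le_sum fun i _ => ?_
      by_cases hi : i ∈ LPAux.Gset E 0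
      · have : t i 0 = 1 := LPAux.forced E ht T 0 (by omega) (by omega) i hi
        simp [LPAux.sfun, hi, this]
      · have : LPAux.sfun E i 0 = 0 := by simp [LPAux.sfun, hi]
        rw [this]
        exact (ht.1 i 0 (Nat.zero_le T)).1
  · constructor
    · exact ⟨LPAux.sfun E, LPAux.sfun_feasible E,
        fun i k _ => LPAux.sfun_binary E i k, rfl⟩
    · rintro x ⟨t, ht, -, rfl⟩
      refine Finset.sum_le_sum fun i _ => ?_
      by_cases hi : i ∈ LPAux.Gset E 0
      · have : t i 0 = 1 := LPAux.forced E ht T 0 (by omega) (by omega) i hi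
        simp [LPAux.sfun, hi, this]
      · have : LPAux.sfun E i 0 = 0 := by simp [LPAux.sfun, hi]
        rw [this]
        exact (ht.1 i 0 (Nat.zero_le T)).1
end

section
/- Let λ > 0, c > 0, and θ > 0. Let u : [0, θ] → ℝ be differentiable with u(t) ≥ 0 for all t ∈ [0, θ], and suppose u'(t) ≤ λ·u(t) − c whenever u(t) > 0. If c ≥ λ·u(0) / (1 − e^{−λθ}), then u(θ) = 0. -/
/-!
The Lyapunov function `V(t) = e^{-λt} (λ u(t) - c)` has derivative `λ e^{-λt} (u' - (λ u - c)) ≤ 0`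
wherever `u > 0`, so it does not increase on `[s, θ]`, where `s` is the last zero of `u`
in `[0, θ]` (or `0` if there is none).
If `u(θ) > 0`, then `V(θ) > -c e^{-λθ}`; but `V(s) ≤ -c e^{-λθ}`, by the bound on `c` when
`s = 0` and because `V(s) = -c e^{-λs}` when `u(s) = 0`.
-/

open Real Set

noncomputable def lyapunov (lam c : ℝ) (u : ℝ → ℝ) (t : ℝ) : ℝ :=
  exp (-(lam * t)) * (lam * u t - c)

theorem hasDerivAt_lyapunov {lam c t d : ℝ} {u : ℝ → ℝ} (hu : HasDerivAt u d t) :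
    HasDerivAt (lyapunov lam c u) (lam * exp (-(lam * t)) * (d - (lam * u t - c))) t := by
  have hexp : HasDerivAt (fun x => exp (-(lam * x))) (exp (-(lam * t)) * -lam) t :=
    ((hasDerivAt_id t).const_mul lam).neg.exp.congr_deriv (by simp)
  exact (hexp.mul ((hu.const_mul lam).sub_const c)).congr_deriv (by ring)

theorem lyapunov_antitoneOn {lam c a b : ℝ} {u u' : ℝ → ℝ} (hlam : 0 ≤ lam)
    (hderiv : ∀ t ∈ Icc a b, HasDerivAt u (u' t) t)
    (hineq : ∀ t ∈ Ioo a b, u' t ≤ lam * u t - c) :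
    AntitoneOn (lyapunov lam c u) (Icc a b) := by
  refine antitoneOn_of_hasDerivWithinAt_nonpos (convex_Icc a b)
    (f' := fun t => lam * exp (-(lam * t)) * (u' t - (lam * u t - c)))
    (fun t ht => (hasDerivAt_lyapunov (hderiv t ht)).continuousAt.continuousWithinAt)
    (fun t ht => ?_) (fun t ht => ?_)
  all_goals rw [interior_Icc] at ht
  · exact (hasDerivAt_lyapunov (hderiv t (Ioo_subset_Icc_self ht))).hasDerivWithinAt
  · have := hineq t ht
    exact mul_nonpos_of_nonneg_of_nonpos (by positivity) (by linarith)

theorem exists_last_zero_or_left {a b : ℝ} {f : ℝ → ℝ} (hab : a ≤ b)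
    (hf : ContinuousOn f (Icc a b)) :
    ∃ s ∈ Icc a b, (s = a ∨ f s = 0) ∧ ∀ t ∈ Ioo s b, f t ≠ 0 := by
  set T := {a} ∪ Icc a b ∩ f ⁻¹' {0}
  have hT : T ⊆ Icc a b := union_subset (singleton_subset_iff.mpr ⟨le_rfl, hab⟩) inter_subset_left
  have hclosed : IsClosed T :=
    isClosed_singleton.union (hf.preimage_isClosed_of_isClosed isClosed_Icc isClosed_singleton)
  have hmem : sSup T ∈ T := hclosed.csSup_mem ⟨a, .inl rfl⟩ (bddAbove_Icc.mono hT)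
  refine ⟨sSup T, hT hmem, ?_, fun t ht hft => ?_⟩
  · rcases hmem with h | h
    exacts [.inl h, .inr h.2]
  · have hle : t ≤ sSup T :=
      le_csSup (bddAbove_Icc.mono hT) (.inr ⟨⟨(hT hmem).1.trans ht.1.le, ht.2.le⟩, hft⟩)
    exact ht.1.not_ge hle

/-- Finite-time synchronization criterion: if `u ≥ 0` is
differentiable on `[0, θ]` with `u' ≤ λ·u − c` wherever `u > 0`, and the coupling
strength satisfies `c ≥ λ·u(0)/(1 − e^{−λθ})`, then `u(θ) = 0`. -/
theorem finite_time_synchronization (lam c θ : ℝ)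
    (hlam : 0 < lam) (hc : 0 < c) (hθ : 0 < θ)
    (u u' : ℝ → ℝ)
    (hderiv : ∀ t ∈ Set.Icc (0 : ℝ) θ, HasDerivAt u (u' t) t)
    (hnonneg : ∀ t ∈ Set.Icc (0 : ℝ) θ, 0 ≤ u t)
    (hineq : ∀ t ∈ Set.Icc (0 : ℝ) θ, 0 < u t → u' t ≤ lam * u t - c)
    (hcbig : lam * u 0 / (1 - Real.exp (-(lam * θ))) ≤ c) :
    u θ = 0 := by
  have hexp : exp (-(lam * θ)) < 1 := exp_lt_one_iff.mpr (by nlinarith)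
  rw [div_le_iff₀ (by linarith)] at hcbig
  by_contra huθ
  replace huθ : 0 < u θ := (hnonneg θ ⟨hθ.le, le_rfl⟩).lt_of_ne' huθ
  obtain ⟨s, hs, hs_start, hs_last⟩ := exists_last_zero_or_left hθ.le
    fun t ht => (hderiv t ht).continuousAt.continuousWithinAt
  have hsub : Icc s θ ⊆ Icc 0 θ := Icc_subset_Icc_left hs.1
  have hdecay : lyapunov lam c u θ ≤ lyapunov lam c u s :=
    lyapunov_antitoneOn hlam.le (fun t ht => hderiv t (hsub ht))
      (fun t ht => hineq t (hsub (Ioo_subset_Icc_self ht))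
        ((hnonneg t (hsub (Ioo_subset_Icc_self ht))).lt_of_ne' (hs_last t ht)))
      ⟨le_rfl, hs.2⟩ ⟨hs.2, le_rfl⟩ hs.2
  have hstart : lyapunov lam c u s ≤ -c * exp (-(lam * θ)) := by
    rcases hs_start with rfl | hus
    · simp only [lyapunov, mul_zero, neg_zero, exp_zero, one_mul]
      linarith
    · have : exp (-(lam * θ)) ≤ exp (-(lam * s)) := exp_le_exp.mpr (by nlinarith [hs.2])
      simp only [lyapunov, hus, mul_zero, zero_sub]
      nlinarith
  have hend : -c * exp (-(lam * θ)) < lyapunov lam c u θ := by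
    simp only [lyapunov]
    nlinarith [exp_pos (-(lam * θ)), mul_pos hlam huθ]
  linarith
end
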